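/- For the generalized Sierpiński graphs of the path P_4: χρ(S^1_{P_4}) = 3, χρ(S^2_{P_4}) = 4, and χρ(S^n_{P_4}) = 5 for every n ≥ 3. -/

import Mathlib

/-- The generalized Sierpiński graph `S^n_G` of a base graph `G` on the vertex set
`[k]_0 = {0, …, k−1}`: the vertices are the words of length `n` over `[k]_0`, and two
distinct words `u, v` are adjacent iff there is an index `i` with `u j = v j` for `j < i`,
`u i` adjacent to `v i` in `G`, and `u j = v i`, `v j = u i` for all `j > i`. -/
def genSierpinski {k : ℕ} (G : SimpleGraph (Fin k)) (n : ℕ) :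
    SimpleGraph (Fin n → Fin k) where
  Adj u v := ∃ i : Fin n,
    (∀ j, j < i → u j = v j) ∧ G.Adj (u i) (v i) ∧ ∀ j, i < j → u j = v i ∧ v j = u i
  symm := by
    constructor
    rintro u v ⟨i, h1, h2, h3⟩
    exact ⟨i, fun j hj => (h1 j hj).symm, h2.symm, fun j hj => ⟨(h3 j hj).2, (h3 j hj).1⟩⟩
  loopless := by
    constructor
    rintro u ⟨i, -, h2, -⟩
    exact G.irrefl h2

/-- The Sierpiński graph `S^n_k`, i.e. the generalized Sierpiński graph of the complete
graph `K_k` on `[k]_0` (in which two vertices are adjacent iff they are distinct). -/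
def sierpinski (k n : ℕ) : SimpleGraph (Fin n → Fin k) :=
  genSierpinski (⊤ : SimpleGraph (Fin k)) n

/-- `c` is a `t`-packing coloring of `G`: every vertex gets a color in `{1, …, t}`, and any
two distinct vertices with the same color `i` are at distance greater than `i`
(equivalently, every walk between them has length greater than `i`). -/
def IsPackingColoring {V : Type*} (G : SimpleGraph V) (t : ℕ) (c : V → ℕ) : Prop :=
  (∀ v, 1 ≤ c v ∧ c v ≤ t) ∧
    ∀ u v, u ≠ v → c u = c v → ∀ p : G.Walk u v, c u < p.length

/-- The packing chromatic number `χρ(G)`: the least `t` such that `G` admits a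
`t`-packing coloring. -/
noncomputable def packingChromatic {V : Type*} (G : SimpleGraph V) : ℕ :=
  sInf {t | ∃ c : V → ℕ, IsPackingColoring G t c}

/-- The path `P_4` on `{0, 1, 2, 3}` with edges `{0,1}, {1,2}, {2,3}`. -/
def pathP4 : SimpleGraph (Fin 4) :=
  SimpleGraph.fromRel (fun u v => (u, v) ∈
    [((0 : Fin 4), (1 : Fin 4)), (1, 2), (2, 3)])

/-!
The distance of `S^n_{P_4}` has a closed form `wordDist`: words in the same top-level copy are as
far apart as their tails, and otherwise a shortest walk leaves one copy at the corner facing the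
other and runs corner to corner through the copies in between. It changes by at most one along an
edge, so it bounds every walk from below, and the walk through the facing corners attains it.

With the distance explicit, the packing colourings of `S^1`, `S^2` and `S^3` are checked directly.
For `n ≥ 3` the colour of a word is that of its last three letters: words in top-level copies that
are not adjacent in `P_4` are at distance at least `15`, and for adjacent copies the distances to
the two ends of the bridge are either at least `8` or already visible in the last three letters.
The lower bounds are exhaustive searches on `S^1`, `S^2` and `S^3`, and `S^3` embeds in every
`S^n`, `n ≥ 3`, by prefixing a fixed letter.
-/

open SimpleGraph

section PackingColoring

variable {V V' : Type*} {G : SimpleGraph V} {t : ℕ} {c : V → ℕ}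

theorem IsPackingColoring.mono {t' : ℕ} (hc : IsPackingColoring G t c) (h : t ≤ t') :
    IsPackingColoring G t' c :=
  ⟨fun v => ⟨(hc.1 v).1, (hc.1 v).2.trans h⟩, hc.2⟩

theorem IsPackingColoring.comap {G' : SimpleGraph V'} {c : V' → ℕ}
    (hc : IsPackingColoring G' t c) (f : G ↪g G') : IsPackingColoring G t (c ∘ f) :=
  ⟨fun v => hc.1 (f v), fun _ _ huv hcuv p =>
    (hc.2 _ _ (f.injective.ne huv) hcuv (p.map f.toHom)).trans_eq (p.length_map _)⟩

theorem isPackingColoring_iff_lt_dist (hG : G.Preconnected) :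
    IsPackingColoring G t c ↔
      (∀ v, 1 ≤ c v ∧ c v ≤ t) ∧ ∀ u v, u ≠ v → c u = c v → c u < G.dist u v := by
  refine and_congr_right fun _ => forall₂_congr fun u v => imp_congr_right fun _ =>
    imp_congr_right fun _ => ⟨fun h => ?_, fun h p => h.trans_le (dist_le p)⟩
  obtain ⟨p, hp⟩ := (hG u v).exists_walk_length_eq_dist
  exact hp ▸ h p

theorem packingChromatic_eq_of_isPackingColoring (hc : IsPackingColoring G (t + 1) c)
    (h : ¬∃ c, IsPackingColoring G t c) : packingChromatic G = t + 1 := by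
  refine le_antisymm (Nat.sInf_le ⟨c, hc⟩) (le_csInf ⟨_, c, hc⟩ fun t' ⟨c', hc'⟩ => ?_)
  by_contra! ht'
  exact h ⟨c', hc'.mono (Nat.le_of_lt_succ ht')⟩

end PackingColoring

section Search

variable {α : Type*} (d : α → α → ℕ) (t : ℕ)

def Admissible (v : α) (i : ℕ) (asg : List (α × ℕ)) : Bool :=
  asg.all fun q => q.2 != i || decide (i < d q.1 v)

/-- Backtracking search: can the partial colouring `asg` be extended to the vertices `vs` with
colours `1, …, t` so that any two vertices `u, v` sharing a colour `i` satisfy `i < d u v`? -/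
def Extendable : List α → List (α × ℕ) → Bool
  | [], _ => true
  | v :: vs, asg => (List.range' 1 t).any fun i =>
      Admissible d v i asg && Extendable vs ((v, i) :: asg)

theorem extendable_eq_true {c : α → ℕ} (hc : ∀ v, 1 ≤ c v ∧ c v ≤ t)
    (hd : ∀ u v, u ≠ v → c u = c v → c u < d u v) (vs : List α) (asg : List (α × ℕ))
    (hvs : vs.Nodup) (hasg : ∀ q ∈ asg, c q.1 = q.2 ∧ q.1 ∉ vs) :
    Extendable d t vs asg = true := by
  induction vs generalizing asg with
  | nil => rfl
  | cons v vs ih =>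
    have hadm : Admissible d v (c v) asg = true := by
      refine List.all_eq_true.mpr fun q hq => ?_
      obtain ⟨hq1, hq2⟩ := hasg q hq
      by_cases h : q.2 = c v
      · have hne : q.1 ≠ v := by rintro rfl; exact hq2 List.mem_cons_self
        have hlt := hd _ _ hne (hq1.trans h)
        rw [hq1, h] at hlt
        simp [hlt]
      · simp [h]
    simp only [Extendable, List.any_eq_true, Bool.and_eq_true]
    refine ⟨c v, List.mem_range'_1.mpr ⟨(hc v).1, by have := (hc v).2; omega⟩, hadm,
      ih _ (List.nodup_cons.mp hvs).2 ?_⟩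
    rintro q (_ | ⟨_, hq⟩)
    · exact ⟨rfl, (List.nodup_cons.mp hvs).1⟩
    · exact ⟨(hasg q hq).1, fun h => (hasg q hq).2 (List.mem_cons_of_mem _ h)⟩

end Search

theorem const_eq_cons {α : Type*} {n : ℕ} (x : α) :
    (fun _ => x : Fin (n + 1) → α) = Fin.cons x fun _ => x :=
  (Fin.cons_self_tail _).symm

namespace genSierpinski

variable {k n : ℕ} {G : SimpleGraph (Fin k)}

theorem adj_cons_cons {a b : Fin k} {u v : Fin n → Fin k} :
    (genSierpinski G (n + 1)).Adj (Fin.cons a u) (Fin.cons b v) ↔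
      (a = b ∧ (genSierpinski G n).Adj u v) ∨
        (G.Adj a b ∧ u = (fun _ => b) ∧ v = (fun _ => a)) := by
  constructor
  · rintro ⟨i, hlt, hadj, hgt⟩
    induction i using Fin.cases with
    | zero =>
      refine .inr ⟨hadj, funext fun j => ?_, funext fun j => ?_⟩
      · simpa using (hgt j.succ j.succ_pos).1
      · simpa using (hgt j.succ j.succ_pos).2
    | succ i =>
      refine .inl ⟨by simpa using hlt 0 i.succ_pos, i, fun j hj => ?_, by simpa using hadj,
        fun j hj => ?_⟩
      · simpa using hlt j.succ (Fin.succ_lt_succ_iff.mpr hj)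
      · simpa using hgt j.succ (Fin.succ_lt_succ_iff.mpr hj)
  · rintro (⟨rfl, i, hlt, hadj, hgt⟩ | ⟨hadj, rfl, rfl⟩)
    · refine ⟨i.succ, fun j hj => ?_, by simpa using hadj, fun j hj => ?_⟩
      · induction j using Fin.cases with
        | zero => rfl
        | succ j => simpa using hlt j (Fin.succ_lt_succ_iff.mp hj)
      · induction j using Fin.cases with
        | zero => exact absurd hj (Fin.not_lt_zero _)
        | succ j => simpa using hgt j (Fin.succ_lt_succ_iff.mp hj)
    · refine ⟨0, fun j hj => absurd hj (Fin.not_lt_zero _), by simpa using hadj,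
        fun j hj => ?_⟩
      induction j using Fin.cases with
      | zero => exact absurd hj (lt_irrefl _)
      | succ j => simp

theorem not_adj_zero (u v : Fin 0 → Fin k) : ¬(genSierpinski G 0).Adj u v :=
  fun ⟨i, _⟩ => i.elim0

def consEmbedding (a : Fin k) : genSierpinski G n ↪g genSierpinski G (n + 1) where
  toFun u := Fin.cons a u
  inj' := Fin.cons_right_injective (α := fun _ => Fin k) a
  map_rel_iff' {u v} := by
    dsimp only [Function.Embedding.coeFn_mk]
    rw [adj_cons_cons]
    exact ⟨fun h => h.elim And.right fun h => (G.loopless.irrefl a h.1).elim,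
      fun h => .inl ⟨rfl, h⟩⟩

theorem exists_walk_cons_cons (a : Fin k) {u v : Fin n → Fin k}
    (p : (genSierpinski G n).Walk u v) :
    ∃ q : (genSierpinski G (n + 1)).Walk (Fin.cons a u) (Fin.cons a v), q.length = p.length :=
  ⟨p.map (consEmbedding a).toHom, p.length_map _⟩

theorem not_exists_isPackingColoring_succ [NeZero k] {t : ℕ}
    (h : ¬∃ c, IsPackingColoring (genSierpinski G n) t c) :
    ¬∃ c, IsPackingColoring (genSierpinski G (n + 1)) t c :=
  fun ⟨_, hc⟩ => h ⟨_, hc.comap (consEmbedding 0)⟩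

end genSierpinski

namespace SierpinskiP4

open genSierpinski

theorem pathP4_adj_iff {a b : Fin 4} : pathP4.Adj a b ↔ Nat.dist a b = 1 := by
  simp only [pathP4, fromRel_adj, List.mem_cons, Prod.mk.injEq, List.not_mem_nil]
  revert a b
  decide

def towards (a b : Fin 4) : Fin 4 := if a < b then a + 1 else a - 1

theorem dist_towards {a b : Fin 4} (h : a ≠ b) : Nat.dist a (towards a b) = 1 := by
  revert a b; decide

theorem dist_towards_add_one {a b : Fin 4} (h : a ≠ b) :
    Nat.dist (towards a b) b + 1 = Nat.dist a b := by
  revert a b; decide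

theorem towards_eq_of_dist_eq_one {a b : Fin 4} (h : Nat.dist a b = 1) : towards a b = b := by
  revert a b; decide

theorem towards_towards {a b : Fin 4} (hab : a ≠ b) (hb : towards a b ≠ b) :
    towards b (towards a b) = towards b a := by
  revert a b; decide

theorem dist_towards_towards {a b : Fin 4} (hab : a ≠ b) (hb : towards a b ≠ b) :
    Nat.dist a (towards (towards a b) b) = 2 := by
  revert a b; decide

theorem towards_eq_towards_of_dist_eq_one {a b c : Fin 4} (hab : Nat.dist a b = 1)
    (hca : c ≠ a) (hcb : c ≠ b) : towards c a = towards c b := by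
  revert a b c; decide

theorem dist_towards_add_two_mul_le {a b c : Fin 4} (hab : Nat.dist a b = 1)
    (hca : c ≠ a) (hcb : c ≠ b) :
    Nat.dist b (towards a c) + 2 * (Nat.dist c a - 1) ≤
      Nat.dist a (towards b c) + 2 * (Nat.dist c b - 1) := by
  revert a b c; decide

/-- For `u 0 ≠ v 0` a shortest walk leaves the copy `u 0` at its corner facing `v 0`, crosses
the `Nat.dist (u 0) (v 0) - 1` copies in between corner to corner (`2 ^ (n + 1) - 1` steps each,
counting one bridge edge), and enters the copy `v 0` at its corner facing `u 0`. -/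
def wordDist : (n : ℕ) → (Fin n → Fin 4) → (Fin n → Fin 4) → ℕ
  | 0, _, _ => 0
  | n + 1, u, v =>
    if u 0 = v 0 then wordDist n (Fin.tail u) (Fin.tail v)
    else wordDist n (Fin.tail u) (fun _ => towards (u 0) (v 0)) +
      wordDist n (Fin.tail v) (fun _ => towards (v 0) (u 0)) + 1 +
      (Nat.dist (u 0) (v 0) - 1) * (2 ^ (n + 1) - 1)

variable {n : ℕ}

@[simp]
theorem wordDist_cons_cons (a b : Fin 4) (u v : Fin n → Fin 4) :
    wordDist (n + 1) (Fin.cons a u) (Fin.cons b v) =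
      if a = b then wordDist n u v
      else wordDist n u (fun _ => towards a b) + wordDist n v (fun _ => towards b a) + 1 +
        (Nat.dist a b - 1) * (2 ^ (n + 1) - 1) := by
  simp [wordDist]

@[simp]
theorem wordDist_self (u : Fin n → Fin 4) : wordDist n u u = 0 := by
  induction n with
  | zero => rfl
  | succ n ih => induction u using Fin.consCases; simp [ih]

theorem wordDist_comm (u v : Fin n → Fin 4) : wordDist n u v = wordDist n v u := by
  induction n with
  | zero => rfl
  | succ n ih =>
    induction u using Fin.consCases with | cons a u =>
    induction v using Fin.consCases with | cons b v =>
    simp only [wordDist_cons_cons, eq_comm (a := a), ih u v, Nat.dist_comm (a : ℕ)]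
    split_ifs <;> ring

theorem wordDist_const_const (x y : Fin 4) :
    wordDist n (fun _ => x) (fun _ => y) = (2 ^ n - 1) * Nat.dist x y := by
  induction n generalizing x y with
  | zero => simp [wordDist]
  | succ n ih =>
    rw [const_eq_cons x, const_eq_cons y, wordDist_cons_cons]
    split_ifs with h
    · simp [h]
    · obtain ⟨d, hd⟩ :=
        Nat.exists_eq_add_one_of_ne_zero (Nat.dist_pos_of_ne (Fin.val_ne_of_ne h)).ne'
      rw [ih, ih, dist_towards h, dist_towards (Ne.symm h), hd, Nat.add_sub_cancel, pow_succ]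
      have h2n := Nat.one_le_two_pow (n := n)
      zify [h2n, (by omega : 1 ≤ 2 ^ n * 2)]
      ring

theorem wordDist_le_of_dist_eq_one {a b : Fin 4} (hab : Nat.dist a b = 1) (c : Fin 4)
    (u : Fin n → Fin 4) :
    wordDist (n + 1) (Fin.cons c u) (Fin.cons a fun _ => b) ≤
      wordDist (n + 1) (Fin.cons c u) (Fin.cons b fun _ => a) + 1 := by
  have hba : Nat.dist b a = 1 := Nat.dist_comm (a : ℕ) b ▸ hab
  simp only [wordDist_cons_cons, wordDist_const_const]
  by_cases hca : c = a
  · subst hca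
    have hcb : c ≠ b := by rintro rfl; simp at hab
    simp [hcb, towards_eq_of_dist_eq_one hab, towards_eq_of_dist_eq_one hba, hab]
    omega
  by_cases hcb : c = b
  · subst hcb
    simp [hca, towards_eq_of_dist_eq_one hab, towards_eq_of_dist_eq_one hba, hba]
  rw [if_neg hca, if_neg hcb, towards_eq_towards_of_dist_eq_one hab hca hcb, pow_succ]
  have hmul := Nat.mul_le_mul_left (2 ^ n - 1) (dist_towards_add_two_mul_le hab hca hcb)
  have hlin : Nat.dist c a - 1 ≤ Nat.dist c b - 1 + 1 := by
    have := Nat.dist.triangle_inequality c b a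
    have := Nat.dist_pos_of_ne (Fin.val_ne_of_ne hcb)
    omega
  have h2n := Nat.one_le_two_pow (n := n)
  rw [show 2 ^ n * 2 - 1 = 2 * (2 ^ n - 1) + 1 by omega]
  generalize 2 ^ n - 1 = P at hmul ⊢
  nlinarith

theorem wordDist_le_of_adj (u : Fin n → Fin 4) {v w : Fin n → Fin 4}
    (h : (genSierpinski pathP4 n).Adj v w) : wordDist n u v ≤ wordDist n u w + 1 := by
  induction n with
  | zero => exact absurd h (not_adj_zero v w)
  | succ n ih =>
    induction u using Fin.consCases with | cons c u =>
    induction v using Fin.consCases with | cons a v =>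
    induction w using Fin.consCases with | cons b w =>
    rcases adj_cons_cons.mp h with ⟨rfl, hvw⟩ | ⟨hab, rfl, rfl⟩
    · have hcorner := ih (fun _ => towards a c) hvw
      rw [wordDist_comm _ v, wordDist_comm _ w] at hcorner
      simp only [wordDist_cons_cons]
      split_ifs
      · exact ih u hvw
      · omega
    · exact wordDist_le_of_dist_eq_one (pathP4_adj_iff.mp hab) c u

theorem wordDist_le_length {u v : Fin n → Fin 4} (p : (genSierpinski pathP4 n).Walk u v) :
    wordDist n u v ≤ p.length := by
  induction p with
  | nil => simp
  | cons h p ih =>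
    rw [Walk.length_cons, wordDist_comm]
    exact (wordDist_le_of_adj _ h).trans (by rw [wordDist_comm]; omega)

theorem wordDist_cons_cons_eq_add {a b : Fin 4} (hab : a ≠ b) (u v : Fin n → Fin 4) :
    wordDist (n + 1) (Fin.cons a u) (Fin.cons b v) =
      wordDist n u (fun _ => towards a b) + 1 +
        wordDist (n + 1) (Fin.cons (towards a b) fun _ => a) (Fin.cons b v) := by
  have hdist := dist_towards_add_one hab
  simp only [wordDist_cons_cons, if_neg hab]
  split_ifs with hb
  · rw [hb, Nat.dist_self] at hdist
    rw [← hdist, wordDist_comm v, hb,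
      towards_eq_of_dist_eq_one (Nat.dist_comm (a : ℕ) b ▸ hdist.symm)]
    omega
  · obtain ⟨d, hd⟩ :=
      Nat.exists_eq_add_one_of_ne_zero (Nat.dist_pos_of_ne (Fin.val_ne_of_ne hb)).ne'
    rw [wordDist_const_const, towards_towards hab hb, dist_towards_towards hab hb, ← hdist, hd,
      pow_succ]
    have h2n := Nat.one_le_two_pow (n := n)
    simp only [Nat.add_sub_cancel]
    zify [h2n, (by omega : 1 ≤ 2 ^ n * 2)]
    ring

theorem exists_walk_length_eq_wordDist (u v : Fin n → Fin 4) :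
    ∃ p : (genSierpinski pathP4 n).Walk u v, p.length = wordDist n u v := by
  induction n with
  | zero => obtain rfl := Subsingleton.elim u v; exact ⟨.nil, rfl⟩
  | succ n ih =>
    induction v using Fin.consCases with | cons b v =>
    suffices ∀ d (a : Fin 4) (u : Fin n → Fin 4), Nat.dist a b = d →
        ∃ p : (genSierpinski pathP4 (n + 1)).Walk (Fin.cons a u) (Fin.cons b v),
          p.length = wordDist (n + 1) (Fin.cons a u) (Fin.cons b v) by
      induction u using Fin.consCases with | cons a u => exact this _ a u rfl
    intro d
    induction d with
    | zero =>
      intro a u had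
      obtain rfl : a = b := Fin.ext (Nat.eq_of_dist_eq_zero had)
      obtain ⟨p, hp⟩ := ih u v
      obtain ⟨q, hq⟩ := exists_walk_cons_cons a p
      exact ⟨q, by simp [hq, hp]⟩
    | succ d ihd =>
      intro a u had
      have hab : a ≠ b := by rintro rfl; simp at had
      have hbridge : (genSierpinski pathP4 (n + 1)).Adj (Fin.cons a fun _ => towards a b)
          (Fin.cons (towards a b) fun _ => a) :=
        adj_cons_cons.mpr (.inr ⟨pathP4_adj_iff.mpr (dist_towards hab), rfl, rfl⟩)
      obtain ⟨p, hp⟩ := ih u (fun _ => towards a b)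
      obtain ⟨p', hp'⟩ := exists_walk_cons_cons a p
      obtain ⟨q, hq⟩ :=
        ihd (towards a b) (fun _ => a) (by have := dist_towards_add_one hab; omega)
      refine ⟨p'.append (.cons hbridge q), ?_⟩
      rw [Walk.length_append, Walk.length_cons, hp', hp, hq, wordDist_cons_cons_eq_add hab]
      ring

theorem preconnected : (genSierpinski pathP4 n).Preconnected := fun u v =>
  (exists_walk_length_eq_wordDist u v).elim fun p _ => p.reachable

theorem dist_eq_wordDist (u v : Fin n → Fin 4) :
    (genSierpinski pathP4 n).dist u v = wordDist n u v := by
  obtain ⟨p, hp⟩ := exists_walk_length_eq_wordDist u v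
  obtain ⟨q, hq⟩ := p.reachable.exists_walk_length_eq_dist
  exact le_antisymm (hp ▸ dist_le p) (hq ▸ wordDist_le_length q)

theorem isPackingColoring_iff {t : ℕ} {c : (Fin n → Fin 4) → ℕ} :
    IsPackingColoring (genSierpinski pathP4 n) t c ↔
      (∀ v, 1 ≤ c v ∧ c v ≤ t) ∧
        ∀ u v, u ≠ v → c u = c v → c u < wordDist n u v := by
  simp only [isPackingColoring_iff_lt_dist preconnected, dist_eq_wordDist]

theorem not_exists_isPackingColoring_of_extendable {t : ℕ} {vs : List (Fin n → Fin 4)}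
    (hvs : vs.Nodup) (h : Extendable (wordDist n) t vs [] = false) :
    ¬∃ c, IsPackingColoring (genSierpinski pathP4 n) t c := fun ⟨_, hc⟩ => by
  obtain ⟨hbound, hdist⟩ := isPackingColoring_iff.mp hc
  simp [extendable_eq_true _ _ hbound hdist vs [] hvs (by simp)] at h

def allWords (n : ℕ) : List (Fin n → Fin 4) :=
  (List.finRange (4 ^ n)).map finFunctionFinEquiv.symm

theorem allWords_nodup : (allWords n).Nodup :=
  (List.nodup_finRange _).map finFunctionFinEquiv.symm.injective

theorem not_exists_isPackingColoring_one_two :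
    ¬∃ c, IsPackingColoring (genSierpinski pathP4 1) 2 c :=
  not_exists_isPackingColoring_of_extendable allWords_nodup (by decide +kernel)

theorem not_exists_isPackingColoring_two_three :
    ¬∃ c, IsPackingColoring (genSierpinski pathP4 2) 3 c :=
  not_exists_isPackingColoring_of_extendable allWords_nodup (by decide +kernel)

/-- The words of `S^3` as base-`4` numerals, least significant letter first, in an order that
keeps the backtracking search small; in the natural order it is far longer. -/
def searchOrder3 : List (Fin (4 ^ 3)) :=
  [54, 38, 22, 26, 41, 6, 10, 42, 25, 57, 18, 58, 37, 9, 45, 2, 34, 46, 21, 53, 29, 61, 50, 30,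
    62, 5, 13, 14, 43, 17, 27, 59, 1, 33, 39, 11, 47, 20, 49, 23, 55, 31, 63, 4, 36, 7, 15, 16,
    52, 24, 19, 0, 32, 8, 40, 3, 35, 48, 56, 51, 44, 28, 60, 12]

theorem not_exists_isPackingColoring_three_four :
    ¬∃ c, IsPackingColoring (genSierpinski pathP4 3) 4 c :=
  not_exists_isPackingColoring_of_extendable
    ((by decide : searchOrder3.Nodup).map finFunctionFinEquiv.symm.injective) (by decide +kernel)

theorem not_exists_isPackingColoring_add_three_four (m : ℕ) :
    ¬∃ c, IsPackingColoring (genSierpinski pathP4 (m + 3)) 4 c := by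
  induction m with
  | zero => exact not_exists_isPackingColoring_three_four
  | succ m ih => exact not_exists_isPackingColoring_succ ih

def coloring1 (u : Fin 1 → Fin 4) : ℕ := ![1, 2, 1, 3] (u 0)

def coloring2 (u : Fin 2 → Fin 4) : ℕ :=
  ![![1, 2, 1, 3], ![1, 3, 1, 2], ![1, 4, 1, 2], ![2, 1, 3, 1]] (u 0) (u 1)

def coloring3 (u : Fin 3 → Fin 4) : ℕ :=
  ![![![1, 2, 1, 3], ![1, 3, 1, 2], ![1, 4, 1, 2], ![1, 3, 1, 5]],
    ![![1, 2, 1, 3], ![1, 3, 1, 2], ![1, 4, 1, 2], ![1, 3, 1, 5]],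
    ![![1, 2, 1, 3], ![1, 3, 1, 2], ![1, 5, 1, 2], ![1, 4, 1, 3]],
    ![![1, 2, 1, 3], ![1, 3, 1, 2], ![1, 5, 1, 2], ![1, 4, 1, 3]]] (u 0) (u 1) (u 2)

theorem isPackingColoring_coloring1 :
    IsPackingColoring (genSierpinski pathP4 1) 3 coloring1 :=
  isPackingColoring_iff.mpr ⟨by decide +kernel, by decide +kernel⟩

theorem isPackingColoring_coloring2 :
    IsPackingColoring (genSierpinski pathP4 2) 4 coloring2 :=
  isPackingColoring_iff.mpr ⟨by decide +kernel, by decide +kernel⟩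

theorem coloring3_mem_Icc : ∀ u, 1 ≤ coloring3 u ∧ coloring3 u ≤ 5 := by
  decide +kernel

theorem coloring3_lt_wordDist :
    ∀ u v : Fin 3 → Fin 4, u ≠ v → coloring3 u = coloring3 v →
      coloring3 u < wordDist 3 u v := by
  decide +kernel

theorem coloring3_lt_of_dist_eq_one :
    ∀ a b : Fin 4, Nat.dist a b = 1 → ∀ u v : Fin 3 → Fin 4, coloring3 u = coloring3 v →
      coloring3 u < min 8 (wordDist 3 u fun _ => b) + 1 + min 8 (wordDist 3 v fun _ => a) := by
  decide +kernel

def lastThree : (m : ℕ) → (Fin (m + 3) → Fin 4) → Fin 3 → Fin 4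
  | 0, u => u
  | m + 1, u => lastThree m (Fin.tail u)

theorem min_le_wordDist_cons_const (a x : Fin 4) (u : Fin n → Fin 4) :
    min (2 ^ n) (wordDist n u fun _ => x) ≤ wordDist (n + 1) (Fin.cons a u) fun _ => x := by
  rw [const_eq_cons x, wordDist_cons_cons]
  split_ifs with hax
  · exact min_le_right _ _
  · rw [wordDist_const_const, dist_towards (Ne.symm hax)]
    have := Nat.one_le_two_pow (n := n)
    omega

theorem min_le_wordDist_lastThree (m : ℕ) (u : Fin (m + 3) → Fin 4) (x : Fin 4) :
    min 8 (wordDist 3 (lastThree m u) fun _ => x) ≤ wordDist (m + 3) u fun _ => x := by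
  induction m with
  | zero => exact min_le_right _ _
  | succ m ih =>
    induction u using Fin.consCases with | cons a u =>
    have h8 : 8 ≤ 2 ^ (m + 3) := Nat.pow_le_pow_right (n := 2) two_pos (by omega : 3 ≤ m + 3)
    calc min 8 (wordDist 3 (lastThree m u) fun _ => x)
        ≤ min (2 ^ (m + 3)) (wordDist (m + 3) u fun _ => x) :=
          le_min ((min_le_left _ _).trans h8) (ih u)
      _ ≤ _ := min_le_wordDist_cons_const a x u

theorem isPackingColoring_coloring3_lastThree (m : ℕ) :
    IsPackingColoring (genSierpinski pathP4 (m + 3)) 5 (coloring3 ∘ lastThree m) := by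
  refine isPackingColoring_iff.mpr ⟨fun u => coloring3_mem_Icc _, ?_⟩
  induction m with
  | zero => exact coloring3_lt_wordDist
  | succ m ih =>
    intro u v huv hc
    induction u using Fin.consCases with | cons a u =>
    induction v using Fin.consCases with | cons b v =>
    simp only [Function.comp_apply, lastThree, Fin.tail_cons] at hc ⊢
    rw [wordDist_cons_cons]
    split_ifs with hab
    · subst hab
      exact ih u v (fun h => huv (h ▸ rfl)) hc
    have hc5 := (coloring3_mem_Icc (lastThree m u)).2
    by_cases hd : Nat.dist a b = 1
    · have hba : Nat.dist b a = 1 := Nat.dist_comm (a : ℕ) b ▸ hd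
      have := coloring3_lt_of_dist_eq_one a b hd _ _ hc
      have := min_le_wordDist_lastThree m u b
      have := min_le_wordDist_lastThree m v a
      rw [towards_eq_of_dist_eq_one hd, towards_eq_of_dist_eq_one hba]
      omega
    · have h2 : 1 ≤ Nat.dist a b - 1 := by
        have := Nat.dist_pos_of_ne (Fin.val_ne_of_ne hab); omega
      have h16 : 16 ≤ 2 ^ (m + 3 + 1) :=
        Nat.pow_le_pow_right (n := 2) two_pos (by omega : 4 ≤ m + 3 + 1)
      have := Nat.mul_le_mul_right (2 ^ (m + 3 + 1) - 1) h2
      omega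

end SierpinskiP4

open SierpinskiP4 in
/-- `χρ(S^1_{P_4}) = 3`, `χρ(S^2_{P_4}) = 4`, and `χρ(S^n_{P_4}) = 5` for all `n ≥ 3`. -/
theorem packingChromatic_genSierpinski_P4 :
    packingChromatic (genSierpinski pathP4 1) = 3 ∧
    packingChromatic (genSierpinski pathP4 2) = 4 ∧
    ∀ n : ℕ, 3 ≤ n → packingChromatic (genSierpinski pathP4 n) = 5 := by
  refine ⟨packingChromatic_eq_of_isPackingColoring isPackingColoring_coloring1
      not_exists_isPackingColoring_one_two,
    packingChromatic_eq_of_isPackingColoring isPackingColoring_coloring2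
      not_exists_isPackingColoring_two_three, fun n hn => ?_⟩
  obtain ⟨m, rfl⟩ := Nat.exists_eq_add_of_le' hn
  exact packingChromatic_eq_of_isPackingColoring (isPackingColoring_coloring3_lastThree m)
    (not_exists_isPackingColoring_add_three_four m)
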